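/- arXiv:1604.04194 — 6 statements merged into one kernel-verified Lean document; each statement's English description precedes it below -/
import Mathlib

section
/- Let d ≥ 1 and n > d + 2 be integers, ε = 1/(n-d), ε̂ = 1/((d+1)(n-d)), and define weights w_1 = … = w_d = 1 - ε̂, w_{d+1} = 1 - (n-(d+1))ε + dε̂, w_{d+2} = … = w_n = ε. Then for every subset S of {1,…,n} with S nonempty and S ≠ {1,…,n}, the sum ∑_{i∈S} w_i is not an integer. -/
/-!
Multiplying by `P = (d + 1)(n - d)` turns the weights into the integers `P - 1`, `2d + 1` and
`d + 1` on the three blocks `[1, d]`, `{d + 1}`, `[d + 2, n]`. If `S` meets these blocks in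
`a`, `b`, `c` elements, its sum is an integer iff `P` divides `c(d + 1) + b(2d + 1) - a`. This
number lies in `[-d, P + d]` and `d < P`, so it is `0` or `P`; the first forces `S = ∅`, the
second (where `c = n - d - 1`) forces `S` to be everything.
-/
open Finset

lemma sum_eq_sum_filter_le_add_eq_add_ge {M : Type*} [AddCommMonoid M] (S : Finset ℕ) (d : ℕ)
    (f : ℕ → M) :
    ∑ i ∈ S, f i = ∑ i ∈ S with i ≤ d, f i + ∑ i ∈ S with i = d + 1, f i
      + ∑ i ∈ S with d + 2 ≤ i, f i := by
  have hB : {i ∈ {i ∈ S | ¬i ≤ d} | i = d + 1} = {i ∈ S | i = d + 1} := by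
    ext i; simp only [mem_filter, and_assoc]; exact and_congr_right fun _ => by omega
  have hC : {i ∈ {i ∈ S | ¬i ≤ d} | ¬i = d + 1} = {i ∈ S | d + 2 ≤ i} := by
    ext i; simp only [mem_filter, and_assoc]; exact and_congr_right fun _ => by omega
  rw [← sum_filter_add_sum_filter_not S (· ≤ d), add_assoc,
    ← sum_filter_add_sum_filter_not {i ∈ S | ¬i ≤ d} (· = d + 1), hB, hC]

lemma card_filter_blocks_le {S : Finset ℕ} {n : ℕ} (hS : S ⊆ Icc 1 n) (d : ℕ) :
    #{i ∈ S | i ≤ d} ≤ d ∧ #{i ∈ S | i = d + 1} ≤ 1 ∧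
      #{i ∈ S | d + 2 ≤ i} ≤ n - (d + 1) := by
  refine ⟨?_, ?_, ?_⟩
  · simpa using card_le_card (s := {i ∈ S | i ≤ d}) (t := Icc 1 d) fun i hi => by
      have := hS (mem_filter.1 hi).1; simp only [mem_filter, mem_Icc] at hi this ⊢; omega
  · exact card_le_one.2 fun i hi j hj => (mem_filter.1 hi).2.trans (mem_filter.1 hj).2.symm
  · simpa using card_le_card (s := {i ∈ S | d + 2 ≤ i}) (t := Icc (d + 2) n) fun i hi => by
      have := hS (mem_filter.1 hi).1; simp only [mem_filter, mem_Icc] at hi this ⊢; omega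

lemma scaled_counts_eq_of_sum_eq {a b c d n : ℕ} (hdn : d < n) {m : ℤ}
    (h : a * (1 - 1 / ((d + 1) * (n - d))) +
      b * (1 - (n - (d + 1)) * (1 / (n - d)) + d * (1 / ((d + 1) * (n - d)))) +
      c * (1 / (n - d)) = (m : ℚ)) :
    (c * (d + 1) + b * (2 * d + 1) - a : ℤ) = (m - a) * ((d + 1) * (n - d)) := by
  have hN : (n : ℚ) - d ≠ 0 := sub_ne_zero.2 (by exact_mod_cast hdn.ne')
  field_simp at h
  have : (c * (d + 1) + b * (2 * d + 1) - a : ℚ) = (m - a) * ((d + 1) * (n - d)) := by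
    linear_combination h
  exact_mod_cast this

lemma Int.eq_zero_or_one_of_neg_le_mul_of_mul_le_add {k P d : ℤ} (hdP : d < P)
    (hlow : -d ≤ k * P) (hhigh : k * P ≤ P + d) : k = 0 ∨ k = 1 := by
  have h0 : -1 < k := by
    by_contra! hk
    nlinarith
  have h1 : k < 2 := by
    by_contra! hk
    nlinarith
  omega

lemma counts_eq_zero_or_full_of_eq_mul {a b c d : ℕ} {N k : ℤ} (ha : a ≤ d) (hb : b ≤ 1)
    (hc : (c : ℤ) < N) (h : (c * (d + 1) + b * (2 * d + 1) - a : ℤ) = k * ((d + 1) * N)) :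
    (a = 0 ∧ b = 0 ∧ c = 0) ∨ (a = d ∧ b = 1 ∧ (c : ℤ) + 1 = N) := by
  have hb' : b = 0 ∨ b = 1 := by omega
  have hcN : (c + 1 : ℤ) * (d + 1) ≤ (d + 1) * N := by nlinarith
  have hb2 : (b : ℤ) * (2 * d + 1) ≤ 2 * d + 1 :=
    mul_le_of_le_one_left (by positivity) (by exact_mod_cast hb)
  rcases Int.eq_zero_or_one_of_neg_le_mul_of_mul_le_add (k := k) (P := (d + 1) * N) (d := d)
    (by nlinarith) (by nlinarith) (by nlinarith) with rfl | rfl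
  · left
    have hc0 : c = 0 := by
      by_contra hc0
      nlinarith [Nat.one_le_iff_ne_zero.2 hc0]
    subst hc0
    rcases hb' with rfl | rfl <;> push_cast at h <;> omega
  · right
    have hcN' : (c : ℤ) + 1 = N := by
      by_contra hne
      have hc2 : (c : ℤ) + 2 ≤ N := by omega
      have : (c + 2 : ℤ) * (d + 1) ≤ (d + 1) * N := by nlinarith
      nlinarith
    subst hcN'
    rcases hb' with rfl | rfl
    · push_cast at h; nlinarith
    · exact ⟨by exact_mod_cast (by linear_combination -h : (a : ℤ) = d), rfl, rfl⟩

theorem no_integer_partial_sums_general (d n : ℕ) (hn : d + 2 < n)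
    (ε εhat : ℚ) (hε : ε = 1 / (n - d)) (hεhat : εhat = 1 / ((d + 1) * (n - d)))
    (w : ℕ → ℚ)
    (hw1 : ∀ i, 1 ≤ i → i ≤ d → w i = 1 - εhat)
    (hw2 : w (d + 1) = 1 - (n - (d + 1)) * ε + d * εhat)
    (hw3 : ∀ i, d + 2 ≤ i → i ≤ n → w i = ε) :
    ∀ S : Finset ℕ, S ⊆ Finset.Icc 1 n → S.Nonempty → S ≠ Finset.Icc 1 n →
      ¬ ∃ m : ℤ, ∑ i ∈ S, w i = (m : ℚ) := by
  rintro S hS hne hfull ⟨m, hm⟩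
  have mem_Icc_of_mem {i} (hi : i ∈ S) := mem_Icc.1 (hS hi)
  have hA : ∑ i ∈ S with i ≤ d, w i = #{i ∈ S | i ≤ d} • (1 - εhat) :=
    sum_eq_card_nsmul fun i hi => hw1 i (mem_Icc_of_mem (mem_filter.1 hi).1).1 (mem_filter.1 hi).2
  have hB : ∑ i ∈ S with i = d + 1, w i = #{i ∈ S | i = d + 1} • w (d + 1) :=
    sum_eq_card_nsmul fun i hi => by rw [(mem_filter.1 hi).2]
  have hC : ∑ i ∈ S with d + 2 ≤ i, w i = #{i ∈ S | d + 2 ≤ i} • ε :=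
    sum_eq_card_nsmul fun i hi => hw3 i (mem_filter.1 hi).2 (mem_Icc_of_mem (mem_filter.1 hi).1).2
  rw [sum_eq_sum_filter_le_add_eq_add_ge S d, hA, hB, hC, hw2, hε, hεhat] at hm
  simp only [nsmul_eq_mul] at hm
  have hcard := sum_eq_sum_filter_le_add_eq_add_ge S d (fun _ => 1)
  simp only [sum_const, smul_eq_mul, mul_one] at hcard
  obtain ⟨ha, hb, hc⟩ := card_filter_blocks_le hS d
  have hscaled := scaled_counts_eq_of_sum_eq (by omega) hm
  rcases counts_eq_zero_or_full_of_eq_mul ha hb (by omega) hscaled with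
    ⟨ha0, hb0, hc0⟩ | ⟨had, hb1, hcn⟩
  · exact hne.card_pos.ne' (by omega)
  · exact hfull (eq_of_subset_of_card_le hS (by simp only [Nat.card_Icc]; omega))

theorem no_integer_partial_sums (d n : ℕ) (hd : 1 ≤ d) (hn : d + 2 < n)
    (ε εhat : ℚ) (hε : ε = 1 / (n - d)) (hεhat : εhat = 1 / ((d + 1) * (n - d)))
    (w : ℕ → ℚ)
    (hw1 : ∀ i, 1 ≤ i → i ≤ d → w i = 1 - εhat)
    (hw2 : w (d + 1) = 1 - (n - (d + 1)) * ε + d * εhat)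
    (hw3 : ∀ i, d + 2 ≤ i → i ≤ n → w i = ε) :
    ∀ S : Finset ℕ, S ⊆ Finset.Icc 1 n → S.Nonempty → S ≠ Finset.Icc 1 n →
      ¬ ∃ m : ℤ, ∑ i ∈ S, w i = (m : ℚ) :=
  no_integer_partial_sums_general d n hn ε εhat hε hεhat w hw1 hw2 hw3
end

section
/- Let d ≥ 1 and n > d + 2, ε = 1/(n-d), ε̂ = 1/((d+1)(n-d)), and weights w_1 = … = w_d = 1 - ε̂, w_{d+1} = 1 - (n-(d+1))ε + dε̂, w_{d+2} = … = w_n = ε. Then: (i) ∑_{i=d+1}^{n} w_i > 1; (ii) for every j with d+2 ≤ j ≤ n, ∑_{i=1}^{d} w_i + w_j > d; (iii) for every k with 1 ≤ k ≤ d+1, ∑_{i∈{1,…,d+1}\{k}} w_i + ∑_{i=d+2}^{n} w_i > d; and (iv) ∑_{i=1}^{d} w_i < d. -/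
/-!
Put `m = n - d`, so `ε = 1/m` and `ε = (d + 1) ε̂`. The middle weight simplifies to
`w_{d+1} = ε + d ε̂`, and the light points carry `(m - 1) ε = 1 - ε`, so the total weight is
`d (1 - ε̂) + (ε + d ε̂) + (1 - ε) = d + 1`. Hence (iii) says exactly that `w_k < 1` for
`k ≤ d + 1`, which for `k = d + 1` is `2d + 1 < (d + 1) m`; the other three inequalities reduce to
`0 < ε̂`.
-/

open Finset

theorem sum_Icc_eq_mul_of_forall_eq {R : Type*} [Ring R] {w : ℕ → R} {a b : ℕ} {c : R}
    (hab : a ≤ b + 1) (hw : ∀ i, a ≤ i → i ≤ b → w i = c) :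
    ∑ i ∈ Icc a b, w i = ((b : R) + 1 - a) * c := by
  rw [sum_eq_card_nsmul fun i hi ↦ hw i (mem_Icc.1 hi).1 (mem_Icc.1 hi).2, Nat.card_Icc,
    nsmul_eq_mul, Nat.cast_sub hab, Nat.cast_add_one]

theorem sum_Icc_eq_add_sum_Icc_succ {M : Type*} [AddCommMonoid M] (w : ℕ → M) {a b : ℕ}
    (hab : a ≤ b) : ∑ i ∈ Icc a b, w i = w a + ∑ i ∈ Icc (a + 1) b, w i := by
  rw [← add_sum_Ioc_eq_sum_Icc hab, Icc_add_one_left_eq_Ioc]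

theorem git_stability_inequalities (d n : ℕ) (hd : 1 ≤ d) (hn : d + 2 < n)
    (ε εhat : ℚ) (hε : ε = 1 / (n - d)) (hεhat : εhat = 1 / ((d + 1) * (n - d)))
    (w : ℕ → ℚ)
    (hw1 : ∀ i, 1 ≤ i → i ≤ d → w i = 1 - εhat)
    (hw2 : w (d + 1) = 1 - (n - (d + 1)) * ε + d * εhat)
    (hw3 : ∀ i, d + 2 ≤ i → i ≤ n → w i = ε) :
    (1 < ∑ i ∈ Finset.Icc (d + 1) n, w i) ∧
    (∀ j, d + 2 ≤ j → j ≤ n → (d : ℚ) < (∑ i ∈ Finset.Icc 1 d, w i) + w j) ∧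
    (∀ k, 1 ≤ k → k ≤ d + 1 →
      (d : ℚ) < (∑ i ∈ (Finset.Icc 1 (d + 1)).erase k, w i) + ∑ i ∈ Finset.Icc (d + 2) n, w i) ∧
    (∑ i ∈ Finset.Icc 1 d, w i < (d : ℚ)) := by
  have hd' : (1 : ℚ) ≤ d := by exact_mod_cast hd
  have hm : (3 : ℚ) ≤ n - d := by
    have : (d : ℚ) + 3 ≤ n := by exact_mod_cast hn
    linarith
  have hεhat_pos : 0 < εhat := by rw [hεhat]; positivity
  have hε_eq : ε = (d + 1) * εhat := by rw [hε, hεhat]; field_simp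
  have hmε : ((n : ℚ) - d) * ε = 1 := by rw [hε]; field_simp
  have hw_mid : w (d + 1) = ε + d * εhat := by rw [hw2]; linarith
  have hw_lt_one : ∀ k ∈ Icc 1 (d + 1), w k < 1 := by
    intro k hk
    obtain ⟨hk1, hkd⟩ := mem_Icc.1 hk
    rcases Nat.lt_or_eq_of_le hkd with hk | rfl
    · rw [hw1 k hk1 (by omega)]; linarith
    · rw [hw_mid, hε_eq]; nlinarith
  have h_heavy : ∑ i ∈ Icc 1 d, w i = d * (1 - εhat) := by
    rw [sum_Icc_eq_mul_of_forall_eq (by omega) hw1]; push_cast; ring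
  have h_light : ∑ i ∈ Icc (d + 2) n, w i = 1 - ε := by
    rw [sum_Icc_eq_mul_of_forall_eq (by omega) hw3]; push_cast; linarith
  have h_total : ∑ i ∈ Icc 1 (d + 1), w i + ∑ i ∈ Icc (d + 2) n, w i = d + 1 := by
    rw [sum_Icc_succ_top (by omega), h_heavy, h_light, hw_mid]; ring
  refine ⟨?_, ?_, ?_, ?_⟩
  · rw [sum_Icc_eq_add_sum_Icc_succ w (by omega), h_light, hw_mid]
    nlinarith
  · intro j hj hjn
    rw [h_heavy, hw3 j hj hjn, hε_eq]
    linarith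
  · intro k hk1 hkd
    have hk : k ∈ Icc 1 (d + 1) := mem_Icc.2 ⟨hk1, hkd⟩
    rw [sum_erase_eq_sub hk]
    linarith [hw_lt_one k hk]
  · rw [h_heavy]
    nlinarith
end

section
/- Let n ≥ 1 and let I_1,…,I_k be subsets of {1,…,n}, each of cardinality at least 2. Let ~ be the equivalence relation on {1,…,n} generated by declaring a ~ b whenever a, b lie in a common I_j. Then every equivalence class C of ~ with |C| ≥ 2 is a union of some of the sets I_j. Consequently, if a_1,…,a_n are positive rationals with ∑_{i∈I_j} a_i > 1 for every j, then ∑_{i∈C} a_i > 1 for every equivalence class C with |C| ≥ 2. -/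
/-!
A nontrivial chain of blocks starts in a block, so every point of a class with at least two
points lies in some block; and a block meeting the class lies inside it.
Hence the class is the union of the blocks meeting it, and its weight is at least that of any
one of them.
-/

namespace Relation

variable {α ι : Type*}

def SameBlock (I : ι → Set α) (a b : α) : Prop :=
  ∃ j, a ∈ I j ∧ b ∈ I j

variable {I : ι → Set α}

theorem SameBlock.eqvGen_eq_or_mem_blocks {b c : α} (h : EqvGen (SameBlock I) b c) :
    b = c ∨ (∃ j, b ∈ I j) ∧ ∃ j, c ∈ I j := by
  induction h with
  | rel x y hxy => exact Or.inr ⟨hxy.imp fun _ => And.left, hxy.imp fun _ => And.right⟩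
  | refl x => exact Or.inl rfl
  | symm x y _ ih => exact ih.imp Eq.symm And.symm
  | trans x y z _ _ ih₁ ih₂ =>
    rcases ih₁ with rfl | ⟨hx, hy⟩
    · exact ih₂
    · rcases ih₂ with rfl | ⟨-, hz⟩
      · exact Or.inr ⟨hx, hy⟩
      · exact Or.inr ⟨hx, hz⟩

theorem SameBlock.exists_mem_block_of_eqvGen_of_ne {a c : α} (h : EqvGen (SameBlock I) c a)
    (hne : c ≠ a) : ∃ j, a ∈ I j :=
  ((eqvGen_eq_or_mem_blocks h).resolve_left hne).2

theorem SameBlock.block_subset_eqvGen_class {a x : α} {j : ι} (hx : x ∈ I j)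
    (hxa : EqvGen (SameBlock I) x a) : I j ⊆ {b | EqvGen (SameBlock I) b a} :=
  fun _ hb => (EqvGen.rel _ _ ⟨j, hb, hx⟩).trans _ _ _ hxa

theorem SameBlock.eqvGen_class_eq_biUnion {a : α} {j₀ : ι} (ha : a ∈ I j₀) :
    {b | EqvGen (SameBlock I) b a} =
      ⋃ j ∈ {j | ∃ x ∈ I j, EqvGen (SameBlock I) x a}, I j := by
  ext b
  simp only [Set.mem_ofPred_eq, Set.mem_iUnion, exists_prop]
  constructor
  · intro hba
    obtain ⟨j, hbj⟩ : ∃ j, b ∈ I j := by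
      rcases eqvGen_eq_or_mem_blocks hba with rfl | ⟨hb, -⟩
      exacts [⟨j₀, ha⟩, hb]
    exact ⟨j, ⟨b, hbj, hba⟩, hbj⟩
  · rintro ⟨j, ⟨x, hx, hxa⟩, hbj⟩
    exact block_subset_eqvGen_class hx hxa hbj

end Relation

open Relation

open Classical in
theorem eqvGen_class_union_of_blocks_general (n k : ℕ)
    (I : Fin k → Finset (Fin n)) :
    (∀ a : Fin n,
      2 ≤ (Finset.univ.filter
            (fun b => Relation.EqvGen (fun a b => ∃ j, a ∈ I j ∧ b ∈ I j) b a)).card →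
      ∃ S : Set (Fin k),
        {b : Fin n | Relation.EqvGen (fun a b => ∃ j, a ∈ I j ∧ b ∈ I j) b a} =
          ⋃ j ∈ S, (I j : Set (Fin n))) ∧
    (∀ w : Fin n → ℚ, (∀ i, 0 < w i) → (∀ j, 1 < ∑ i ∈ I j, w i) →
      ∀ a : Fin n,
        2 ≤ (Finset.univ.filter
              (fun b => Relation.EqvGen (fun a b => ∃ j, a ∈ I j ∧ b ∈ I j) b a)).card →
        1 < ∑ i ∈ Finset.univ.filter
              (fun b => Relation.EqvGen (fun a b => ∃ j, a ∈ I j ∧ b ∈ I j) b a), w i) := by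
  let J : Fin k → Set (Fin n) := fun j => I j
  let R := SameBlock J
  have mem_block : ∀ a, 2 ≤ (Finset.univ.filter (EqvGen R · a)).card → ∃ j, a ∈ I j := by
    intro a hcard
    obtain ⟨c, hc, hne⟩ := Finset.exists_mem_ne hcard a
    exact SameBlock.exists_mem_block_of_eqvGen_of_ne (Finset.mem_filter.mp hc).2 hne
  refine ⟨fun a hcard => ?_, fun w hw hsum a hcard => ?_⟩
  · obtain ⟨j, ha⟩ := mem_block a hcard
    exact ⟨_, SameBlock.eqvGen_class_eq_biUnion (I := J) ha⟩
  · obtain ⟨j, ha⟩ := mem_block a hcard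
    have hsub : I j ⊆ Finset.univ.filter (EqvGen R · a) := fun b hb =>
      Finset.mem_filter.mpr ⟨Finset.mem_univ b,
        SameBlock.block_subset_eqvGen_class (I := J) ha (EqvGen.refl a) hb⟩
    calc 1 < ∑ i ∈ I j, w i := hsum j
      _ ≤ _ := Finset.sum_le_sum_of_subset_of_nonneg hsub fun i _ _ => (hw i).le

open Classical in
theorem eqvGen_class_union_of_blocks (n k : ℕ) (hn : 1 ≤ n)
    (I : Fin k → Finset (Fin n)) (hcard : ∀ j, 2 ≤ (I j).card) :
    (∀ a : Fin n,
      2 ≤ (Finset.univ.filter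
            (fun b => Relation.EqvGen (fun a b => ∃ j, a ∈ I j ∧ b ∈ I j) b a)).card →
      ∃ S : Set (Fin k),
        {b : Fin n | Relation.EqvGen (fun a b => ∃ j, a ∈ I j ∧ b ∈ I j) b a} =
          ⋃ j ∈ S, (I j : Set (Fin n))) ∧
    (∀ w : Fin n → ℚ, (∀ i, 0 < w i) → (∀ j, 1 < ∑ i ∈ I j, w i) →
      ∀ a : Fin n,
        2 ≤ (Finset.univ.filter
              (fun b => Relation.EqvGen (fun a b => ∃ j, a ∈ I j ∧ b ∈ I j) b a)).card →
        1 < ∑ i ∈ Finset.univ.filter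
              (fun b => Relation.EqvGen (fun a b => ∃ j, a ∈ I j ∧ b ∈ I j) b a), w i) :=
  eqvGen_class_union_of_blocks_general n k I
end

section
/- Let k be a field, d ≥ 1, n ≥ 3, and let p, q : {1,…,n} → k^d be injective maps (configurations of n pairwise distinct labeled points). Suppose that for every 3-element subset I ⊆ {1,…,n} there exist c_I ∈ k with c_I ≠ 0 and v_I ∈ k^d such that q_i = c_I·p_i + v_I for all i ∈ I. Then there exist c ∈ k with c ≠ 0 and v ∈ k^d such that q_i = c·p_i + v for all i ∈ {1,…,n}. -/
/-! A map `x ↦ c • x + v` is pinned down by its values at two distinct points. Fix labels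
`a`, `b` with `p a ≠ p b`; since there are at least three labels, every label `j` lies in a
triple with `a` and `b`, and the homothety of that triple agrees with `q` at `a` and `b`, hence
is always the same one. -/

theorem smul_add_params_eq_of_ne {R M : Type*} [Ring R] [IsCancelMulZero R] [AddCommGroup M]
    [Module R M] [Module.IsTorsionFree R M] {x y v v' : M} {c c' : R} (hxy : x ≠ y)
    (hx : c • x + v = c' • x + v') (hy : c • y + v = c' • y + v') : c = c' ∧ v = v' := by
  have hdiff : (c - c') • (x - y) = 0 := by
    rw [sub_smul, smul_sub, smul_sub]
    linear_combination (norm := abel) hx - hy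
  have hc : c = c' :=
    sub_eq_zero.mp ((smul_eq_zero.mp hdiff).resolve_right (sub_ne_zero.mpr hxy))
  subst hc
  exact ⟨rfl, add_left_cancel hx⟩

theorem exists_smul_add_of_forall_card_eq_three {ι R M : Type*} [Fintype ι] [DecidableEq ι]
    [Ring R] [IsCancelMulZero R] [AddCommGroup M] [Module R M] [Module.IsTorsionFree R M]
    (hι : 3 ≤ Fintype.card ι) {p q : ι → M} {a b : ι} (hab : p a ≠ p b)
    (h : ∀ I : Finset ι, I.card = 3 → ∃ c : R, c ≠ 0 ∧ ∃ v : M, ∀ i ∈ I, q i = c • p i + v) :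
    ∃ c : R, c ≠ 0 ∧ ∃ v : M, ∀ i, q i = c • p i + v := by
  have htriple (j : ι) : ∃ I : Finset ι, a ∈ I ∧ b ∈ I ∧ j ∈ I ∧ I.card = 3 := by
    obtain ⟨I, hsub, hI⟩ :=
      Finset.exists_superset_card_eq (Finset.card_le_three (a := a) (b := b) (c := j)) hι
    exact ⟨I, hsub (by simp), hsub (by simp), hsub (by simp), hI⟩
  obtain ⟨I₀, haI₀, hbI₀, -, hI₀⟩ := htriple a
  obtain ⟨c, hc, v, hcv⟩ := h I₀ hI₀
  refine ⟨c, hc, v, fun j => ?_⟩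
  obtain ⟨I, haI, hbI, hjI, hI⟩ := htriple j
  obtain ⟨c', -, v', hcv'⟩ := h I hI
  obtain ⟨rfl, rfl⟩ := smul_add_params_eq_of_ne hab
    ((hcv a haI₀).symm.trans (hcv' a haI)) ((hcv b hbI₀).symm.trans (hcv' b hbI))
  exact hcv' j hjI

theorem triples_determine_configuration_general (k : Type*) [Field k] (d n : ℕ)
    (hn : 3 ≤ n)
    (p q : Fin n → (Fin d → k)) (hp : Function.Injective p)
    (h : ∀ I : Finset (Fin n), I.card = 3 →
      ∃ c : k, c ≠ 0 ∧ ∃ v : Fin d → k, ∀ i ∈ I, q i = c • p i + v) :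
    ∃ c : k, c ≠ 0 ∧ ∃ v : Fin d → k, ∀ i, q i = c • p i + v := by
  have hp01 : p ⟨0, by omega⟩ ≠ p ⟨1, by omega⟩ := hp.ne (by simp [Fin.ext_iff])
  exact exists_smul_add_of_forall_card_eq_three (by simpa using hn) hp01 h

theorem triples_determine_configuration (k : Type*) [Field k] (d n : ℕ)
    (hd : 1 ≤ d) (hn : 3 ≤ n)
    (p q : Fin n → (Fin d → k)) (hp : Function.Injective p) (hq : Function.Injective q)
    (h : ∀ I : Finset (Fin n), I.card = 3 →
      ∃ c : k, c ≠ 0 ∧ ∃ v : Fin d → k, ∀ i ∈ I, q i = c • p i + v) :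
    ∃ c : k, c ≠ 0 ∧ ∃ v : Fin d → k, ∀ i, q i = c • p i + v :=
  triples_determine_configuration_general k d n hn p q hp h
end

section
/- Let k be a field with at least 4 elements and d ≥ 1. There exist injective maps p, q : {1,2,3} → k^d such that for every 2-element subset {i,j} ⊆ {1,2,3} the difference q_j − q_i is a nonzero scalar multiple of p_j − p_i, and yet there exist no c ∈ k^× and v ∈ k^d with q_i = c·p_i + v for all i = 1,2,3. -/
/-!
Put the three points on one line through a nonzero vector `e`, at parameters `0, 1, t` for `p`
and `0, 1, u` for `q`, with `t ≠ u` both outside `{0, 1}` (this is where `4 ≤ #k` is needed).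
Any two distinct points on a line differ by a multiple of `e`, so every pair of `q` is
equivalent to the corresponding pair of `p`. A map `x ↦ c • x + v` matching the whole
configurations multiplies differences of parameters by `c`; the pair `0, 1` forces `c = 1`
and then the pair `0, 2` forces `u = t`.
-/

open Function

lemma Finset.exists_ne_pair_of_four_le_card {α : Type*} [DecidableEq α] {s : Finset α}
    (hs : 4 ≤ s.card) (x y : α) : ∃ t u : α, t ≠ x ∧ t ≠ y ∧ u ≠ x ∧ u ≠ y ∧ t ≠ u := by
  have hcard : 1 < (s \ {x, y}).card := by
    have := Finset.le_card_sdiff {x, y} s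
    have := Finset.card_le_two (a := x) (b := y)
    omega
  obtain ⟨t, ht, u, hu, htu⟩ := Finset.one_lt_card.mp hcard
  simp only [Finset.mem_sdiff, Finset.mem_insert, Finset.mem_singleton, not_or] at ht hu
  exact ⟨t, u, ht.2.1, ht.2.2, hu.2.1, hu.2.2, htu⟩

lemma injective_vec_zero_one {k : Type*} [Field k] {t : k} (ht0 : t ≠ 0) (ht1 : t ≠ 1) :
    Injective ![(0 : k), 1, t] := by
  intro i j hij
  fin_cases i <;> fin_cases j <;> simp_all [eq_comm]

section Line

variable {ι k V : Type*} [Field k] [AddCommGroup V] [Module k V]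

lemma injective_smul_right_of_injective {a : ι → k} (ha : Injective a) {e : V} (he : e ≠ 0) :
    Injective fun i => a i • e :=
  (smul_left_injective k he).comp ha

lemma exists_ne_zero_smul_sub_of_injective {a b : ι → k} (ha : Injective a) (hb : Injective b)
    (e : V) {i j : ι} (hij : i ≠ j) :
    ∃ c : k, c ≠ 0 ∧ b j • e - b i • e = c • (a j • e - a i • e) := by
  have ha' : a j - a i ≠ 0 := sub_ne_zero.mpr (ha.ne hij.symm)
  have hb' : b j - b i ≠ 0 := sub_ne_zero.mpr (hb.ne hij.symm)
  refine ⟨(b j - b i) / (a j - a i), div_ne_zero hb' ha', ?_⟩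
  rw [← sub_smul, ← sub_smul, smul_smul, div_mul_cancel₀ _ ha']

lemma sub_eq_mul_sub_of_smul_eq_smul_add {a b : ι → k} {e : V} (he : e ≠ 0) {c : k} {v : V}
    (h : ∀ i, b i • e = c • a i • e + v) (i j : ι) : b j - b i = c * (a j - a i) := by
  apply smul_left_injective k he
  simp only [sub_smul, mul_smul, smul_sub, h]
  abel

end Line

theorem pairs_do_not_determine_configuration (k : Type*) [Field k] (d : ℕ) (hd : 1 ≤ d)
    (hcard : ∃ s : Finset k, 4 ≤ s.card) :
    ∃ p q : Fin 3 → (Fin d → k),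
      Function.Injective p ∧ Function.Injective q ∧
      (∀ i j : Fin 3, i ≠ j → ∃ c : k, c ≠ 0 ∧ q j - q i = c • (p j - p i)) ∧
      ¬ ∃ c : k, c ≠ 0 ∧ ∃ v : Fin d → k, ∀ i, q i = c • p i + v := by
  classical
  obtain ⟨s, hs⟩ := hcard
  obtain ⟨t, u, ht0, ht1, hu0, hu1, htu⟩ := s.exists_ne_pair_of_four_le_card hs 0 1
  have : Nonempty (Fin d) := ⟨⟨0, hd⟩⟩
  obtain ⟨e, he⟩ := exists_ne (0 : Fin d → k)
  have hp := injective_vec_zero_one ht0 ht1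
  have hq := injective_vec_zero_one hu0 hu1
  refine ⟨fun i => ![0, 1, t] i • e, fun i => ![0, 1, u] i • e,
    injective_smul_right_of_injective hp he, injective_smul_right_of_injective hq he,
    fun i j hij => exists_ne_zero_smul_sub_of_injective hp hq e hij, ?_⟩
  rintro ⟨c, -, v, hv⟩
  have h01 := sub_eq_mul_sub_of_smul_eq_smul_add he hv 0 1
  have h02 := sub_eq_mul_sub_of_smul_eq_smul_add he hv 0 2
  simp only [Matrix.cons_val, sub_zero, mul_one] at h01 h02
  exact htu (by rw [h02, ← h01, one_mul])
end

section
/- Let R be a commutative ring, A a commutative R-algebra, and I ⊆ A an ideal. Assume that A/I is flat as an R-module and that for every m ≥ 0 the A/I-module I^m/I^{m+1} is flat over A/I. Then for every m ≥ 1, the R-module A/I^m is flat. -/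
/-!
Since `I ^ 0 = ⊤`, induct from `m = 0`. The sequence
`0 → I ^ m / I ^ (m + 1) → A / I ^ (m + 1) → A / I ^ m → 0` is exact, its left term is flat
over `A / I` and hence over `R`, and an extension of flat modules is flat: tensoring the sequence
with an injection `X → Y` gives a ladder whose rows stay left exact because the right term is
flat, and a diagram chase shows the middle vertical map is injective.
-/

open LinearMap

lemma Module.Flat.of_injective_of_surjective_of_exact {R N M P : Type*} [CommRing R]
    [AddCommGroup N] [Module R N] [AddCommGroup M] [Module R M] [AddCommGroup P] [Module R P]
    [Module.Flat R N] [Module.Flat R P] {f : N →ₗ[R] M} {g : M →ₗ[R] P}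
    (hf : Function.Injective f) (hg : Function.Surjective g) (hfg : Function.Exact f g) :
    Module.Flat R M := by
  refine Module.Flat.iff_rTensor_preserves_injective_linearMap.mpr fun X Y _ _ _ _ u hu ↦ ?_
  refine (injective_iff_map_eq_zero _).mpr fun x hx ↦ ?_
  have hgx : g.lTensor X x = 0 := rTensor_preserves_injective_linearMap u hu <| by
    rw [← comp_apply, rTensor_comp_lTensor, ← lTensor_comp_rTensor, comp_apply, hx, map_zero,
      map_zero]
  obtain ⟨y, rfl⟩ := (_root_.lTensor_exact X hfg hg x).mp hgx
  have hy : u.rTensor N y = 0 := lTensor_injective_of_exact_of_flat g hg f hf hfg Y <| by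
    rw [← comp_apply, lTensor_comp_rTensor, ← rTensor_comp_lTensor, comp_apply, hx, map_zero]
  have hy₀ : y = 0 := rTensor_preserves_injective_linearMap u hu (by rw [hy, map_zero])
  rw [hy₀, map_zero]

namespace Submodule

variable {R M : Type*} [Ring R] [AddCommGroup M] [Module R M] {p q : Submodule R M}

lemma mapQ_comap_subtype_injective :
    Function.Injective ((p.comap q.subtype).mapQ p q.subtype le_rfl) := by
  rw [← ker_eq_bot, ker_mapQ, mkQ_map_self]

lemma exact_mapQ_comap_subtype_factor (h : p ≤ q) :
    Function.Exact ((p.comap q.subtype).mapQ p q.subtype le_rfl) (factor h) := by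
  rw [exact_iff, ker_mapQ, range_mapQ, range_subtype, comap_id]

end Submodule

lemma Ideal.comap_subtype_pow_succ {A : Type*} [CommRing A] (I : Ideal A) (n : ℕ) :
    Submodule.comap (I ^ n).subtype (I ^ (n + 1)) = I • ⊤ := by
  ext x
  rw [Submodule.mem_smul_top_iff, pow_succ']
  rfl

lemma Ideal.flat_quotient_pow_succ {R A : Type*} [CommRing R] [CommRing A] [Algebra R A]
    (I : Ideal A) (n : ℕ) [Module.Flat R (A ⧸ I ^ n)]
    [Module.Flat R (↥(I ^ n) ⧸ I • (⊤ : Submodule A ↥(I ^ n)))] :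
    Module.Flat R (A ⧸ I ^ (n + 1)) := by
  have : Module.Flat R (↥(I ^ n) ⧸ Submodule.comap (I ^ n).subtype (I ^ (n + 1))) :=
    .of_linearEquiv ((Submodule.quotEquivOfEq _ _ (I.comap_subtype_pow_succ n)).restrictScalars R)
  have hle : I ^ (n + 1) ≤ I ^ n := Ideal.pow_le_pow_right n.le_succ
  exact .of_injective_of_surjective_of_exact
    (f := (Submodule.mapQ _ _ (I ^ n).subtype le_rfl).restrictScalars R)
    (g := (Submodule.factor hle).restrictScalars R)
    Submodule.mapQ_comap_subtype_injective (Submodule.factor_surjective hle)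
    (Submodule.exact_mapQ_comap_subtype_factor hle)

theorem flat_quotient_powers (R A : Type*) [CommRing R] [CommRing A] [Algebra R A]
    (I : Ideal A)
    (hflat : Module.Flat R (A ⧸ I))
    (hgraded : ∀ m : ℕ,
      Module.Flat (A ⧸ I) ((↥(I ^ m)) ⧸ (I • (⊤ : Submodule A ↥(I ^ m))))) :
    ∀ m : ℕ, 1 ≤ m → Module.Flat R (A ⧸ I ^ m) := by
  suffices ∀ m, Module.Flat R (A ⧸ I ^ m) from fun m _ ↦ this m
  intro m
  induction m with
  | zero =>
    have : Subsingleton (A ⧸ I ^ 0) := by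
      rw [Ideal.Quotient.subsingleton_iff, pow_zero, Ideal.one_eq_top]
    infer_instance
  | succ n ih =>
    have := hgraded n
    have : Module.Flat R (↥(I ^ n) ⧸ I • (⊤ : Submodule A ↥(I ^ n))) := .trans R (A ⧸ I) _
    exact I.flat_quotient_pow_succ n
end
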